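/- For any ϱ > 0 there exists a constant γ = γ(θ, ϱ) > 0 such that for every integer d ≥ 2, every λ with |λ| > ϱ and dλ² ≤ 1, and every n ≥ 0: x_{n+1;θ} ≥ γ·x_{n;θ}. -/

import Mathlib

open Finset Filter

namespace Broadcast

/-- The root distribution `π = (θ/2, θ/2, (1-θ)/2, (1-θ)/2)`. -/
noncomputable def rootDist (θ : ℝ) (i : Fin 4) : ℝ :=
  if (i : ℕ) < 2 then θ / 2 else (1 - θ) / 2

/-- The transition matrix `P i j = λ · 1{i=j} + (1-λ) π_j`. -/
noncomputable def trans (θ lam : ℝ) (i j : Fin 4) : ℝ :=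
  (if i = j then lam else 0) + (1 - lam) * rootDist θ j

/-- Vertices at level `n` of the infinite rooted `d`-ary tree, encoded as paths. -/
abbrev Vtx (d n : ℕ) := Fin n → Fin d

/-- Configurations (assignments of states) on level `n`. -/
abbrev Config (d n : ℕ) := Vtx d n → Fin 4

/-- Restriction of a level-`(n+1)` configuration to the subtree of the `j`-th child
of the root. -/
def restrict {d n : ℕ} (j : Fin d) (A : Config d (n + 1)) : Config d n :=
  fun p => A (Fin.cons j p)

/-- `lik θ λ d n i A` is the probability of observing the configuration `A` on level `n`,
given that the root is in state `i` (the broadcasting process). -/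
noncomputable def lik (θ lam : ℝ) (d : ℕ) : (n : ℕ) → Fin 4 → Config d n → ℝ
  | 0, i, A => if A Fin.elim0 = i then 1 else 0
  | n + 1, i, A =>
      ∏ j : Fin d, ∑ k : Fin 4, trans θ lam i k * lik θ lam d n k (restrict j A)

/-- Unconditional probability of observing the configuration `A` on level `n`. -/
noncomputable def marg (θ lam : ℝ) (d n : ℕ) (A : Config d n) : ℝ :=
  ∑ i : Fin 4, rootDist θ i * lik θ lam d n i A

/-- The posterior `f_n(i, A) = P(σ_ρ = i ∣ σ(n) = A)`. -/
noncomputable def post (θ lam : ℝ) (d n : ℕ) (i : Fin 4) (A : Config d n) : ℝ :=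
  rootDist θ i * lik θ lam d n i A / marg θ lam d n A

/-- Expectation of `g(σ(n))` conditioned on the root being in state `r`,
i.e. `E g(σ^r(n))`. -/
noncomputable def condE (θ lam : ℝ) (d n : ℕ) (r : Fin 4) (g : Config d n → ℝ) : ℝ :=
  ∑ A : Config d n, lik θ lam d n r A * g A

/-- Unconditional expectation of `g(σ(n))`. -/
noncomputable def uncondE (θ lam : ℝ) (d n : ℕ) (g : Config d n → ℝ) : ℝ :=
  ∑ A : Config d n, marg θ lam d n A * g A

/-- `x_{n;θ} = E f_n(1, σ¹(n)) - θ/2`. -/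
noncomputable def xT (θ lam : ℝ) (d n : ℕ) : ℝ :=
  condE θ lam d n 0 (fun A => post θ lam d n 0 A) - θ / 2

/-- `y_{n;θ} = E f_n(2, σ¹(n)) - θ/2`. -/
noncomputable def yT (θ lam : ℝ) (d n : ℕ) : ℝ :=
  condE θ lam d n 0 (fun A => post θ lam d n 1 A) - θ / 2

/-- `z_{n;θ} = E f_n(1, σ³(n)) - θ/2`. -/
noncomputable def zT (θ lam : ℝ) (d n : ℕ) : ℝ :=
  condE θ lam d n 2 (fun A => post θ lam d n 0 A) - θ / 2

/-- `x_{n;1-θ} = E f_n(3, σ³(n)) - (1-θ)/2`. -/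
noncomputable def xH (θ lam : ℝ) (d n : ℕ) : ℝ :=
  condE θ lam d n 2 (fun A => post θ lam d n 2 A) - (1 - θ) / 2

/-- `y_{n;1-θ} = E f_n(4, σ³(n)) - (1-θ)/2`. -/
noncomputable def yH (θ lam : ℝ) (d n : ℕ) : ℝ :=
  condE θ lam d n 2 (fun A => post θ lam d n 3 A) - (1 - θ) / 2

/-- `z_{n;1-θ} = E f_n(3, σ¹(n)) - (1-θ)/2`. -/
noncomputable def zH (θ lam : ℝ) (d n : ℕ) : ℝ :=
  condE θ lam d n 0 (fun A => post θ lam d n 2 A) - (1 - θ) / 2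

/-- `u_{n;θ} = E (f_n(1, σ¹(n)) - θ/2)²`. -/
noncomputable def uT (θ lam : ℝ) (d n : ℕ) : ℝ :=
  condE θ lam d n 0 (fun A => (post θ lam d n 0 A - θ / 2) ^ 2)

/-- `v_{n;θ} = E (f_n(2, σ¹(n)) - θ/2)²`. -/
noncomputable def vT (θ lam : ℝ) (d n : ℕ) : ℝ :=
  condE θ lam d n 0 (fun A => (post θ lam d n 1 A - θ / 2) ^ 2)

/-- `w_{n;θ} = E (f_n(1, σ³(n)) - θ/2)²`. -/
noncomputable def wT (θ lam : ℝ) (d n : ℕ) : ℝ :=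
  condE θ lam d n 2 (fun A => (post θ lam d n 0 A - θ / 2) ^ 2)

/-- `w_{n;1-θ} = E (f_n(3, σ¹(n)) - (1-θ)/2)²`. -/
noncomputable def wH (θ lam : ℝ) (d n : ℕ) : ℝ :=
  condE θ lam d n 0 (fun A => (post θ lam d n 2 A - (1 - θ) / 2) ^ 2)

/-- `Y_{ij}(n) = f_n(i, σ_j(n+1))`, viewed as a function of the level-`(n+1)`
configuration. -/
noncomputable def Yf (θ lam : ℝ) (d n : ℕ) (i : Fin 4) (j : Fin d)
    (A : Config d (n + 1)) : ℝ :=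
  post θ lam d n i (restrict j A)

/-- `Z_i(n)`, viewed as a function of the level-`(n+1)` configuration. -/
noncomputable def Zf (θ lam : ℝ) (d n : ℕ) (i : Fin 4) (A : Config d (n + 1)) : ℝ :=
  if (i : ℕ) < 2 then
    ∏ j : Fin d, (1 + (2 * lam / θ) * (Yf θ lam d n i j A - θ / 2))
  else
    ∏ j : Fin d, (1 + (2 * lam / (1 - θ)) * (Yf θ lam d n i j A - (1 - θ) / 2))

/-- `S = (θ/2)Z₁ + (θ/2)Z₂ + ((1-θ)/2)Z₃ + ((1-θ)/2)Z₄`. -/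
noncomputable def Sf (θ lam : ℝ) (d n : ℕ) (A : Config d (n + 1)) : ℝ :=
  θ / 2 * Zf θ lam d n 0 A + θ / 2 * Zf θ lam d n 1 A
    + (1 - θ) / 2 * Zf θ lam d n 2 A + (1 - θ) / 2 * Zf θ lam d n 3 A

/-- Total variation distance between the laws of `σ^i(n)` and `σ^j(n)`. -/
noncomputable def dTV (θ lam : ℝ) (d n : ℕ) (i j : Fin 4) : ℝ :=
  (∑ A : Config d n, |lik θ lam d n i A - lik θ lam d n j A|) / 2

/-- The model is reconstructible if for some pair of root states the total variation
distance between the conditioned level-`n` configurations does not vanish. -/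
def Reconstructible (θ lam : ℝ) (d : ℕ) : Prop :=
  ∃ i j : Fin 4, 0 < Filter.limsup (fun n => dTV θ lam d n i j) Filter.atTop

/-- Probability that the root is in state `i` and the states at the vertices
`v 1, …, v k ∈ L(M)` are `c 1, …, c k`. -/
noncomputable def jointRootEvent (θ lam : ℝ) (d M k : ℕ) (v : Fin k → Vtx d M)
    (c : Fin k → Fin 4) (i : Fin 4) : ℝ :=
  ∑ A : Config d M,
    if ∀ t, A (v t) = c t then rootDist θ i * lik θ lam d M i A else 0

/-- Conditional probability `P(σ_ρ = i ∣ σ_{v t} = c t, 1 ≤ t ≤ k)`. -/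
noncomputable def condRoot (θ lam : ℝ) (d M k : ℕ) (v : Fin k → Vtx d M)
    (c : Fin k → Fin 4) (i : Fin 4) : ℝ :=
  jointRootEvent θ lam d M k v c i / ∑ i' : Fin 4, jointRootEvent θ lam d M k v c i'

/-! With `Vₙ = E (f_n(i, σ(n)) - πᵢ)²` (unconditional expectation), Bayes' rule gives
`Vₙ = πᵢ · E (f_n(i, σⁱ(n)) - πᵢ)`, so `θ/2 · x_{n;θ} = Vₙ` for `i = 1`. The centred posterior
at level `n` of the subtree of one child of the root has covariance `λ Vₙ` with the centred
posterior at level `n + 1`, so Cauchy–Schwarz yields `λ² Vₙ ≤ V_{n+1}`, hence `γ = ϱ²` works. -/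

end Broadcast

namespace Fintype

theorem sum_prod_mul_apply {ι X R : Type*} [Fintype ι] [DecidableEq ι] [Fintype X]
    [CommSemiring R] {h : X → R} (hh : ∑ x, h x = 1) (w : X → R) (j₀ : ι) :
    ∑ F : ι → X, (∏ j, h (F j)) * w (F j₀) = ∑ x, h x * w x := by
  have hsplit : ∀ F : ι → X, (∏ j, h (F j)) * w (F j₀)
      = ∏ j, h (F j) * (if j = j₀ then w (F j) else 1) := fun F => by
    rw [prod_mul_distrib, prod_ite_eq']
  simp_rw [hsplit]
  rw [← Fintype.prod_sum fun j x => h x * if j = j₀ then w x else 1,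
    Fintype.prod_eq_single j₀ fun j hj => by simp [hj, hh]]
  simp

end Fintype

namespace Broadcast

section

variable {θ lam : ℝ} {d n : ℕ}

theorem sum_rootDist (θ : ℝ) : ∑ i, rootDist θ i = 1 := by
  simp [rootDist, Fin.sum_univ_four]
  ring

theorem rootDist_zero (θ : ℝ) : rootDist θ 0 = θ / 2 := by
  simp [rootDist]

theorem rootDist_nonneg (hθ : θ ∈ Set.Icc (0 : ℝ) 1) (i : Fin 4) : 0 ≤ rootDist θ i := by
  obtain ⟨h0, h1⟩ := hθ
  unfold rootDist
  split <;> linarith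

theorem sum_trans_mul (θ lam : ℝ) (i : Fin 4) (g : Fin 4 → ℝ) :
    ∑ k, trans θ lam i k * g k = lam * g i + (1 - lam) * ∑ k, rootDist θ k * g k := by
  simp only [trans, add_mul, sum_add_distrib, ite_mul, zero_mul, sum_ite_eq, mem_univ,
    if_true, mul_sum, mul_assoc]

theorem sum_trans (θ lam : ℝ) (i : Fin 4) : ∑ k, trans θ lam i k = 1 := by
  simpa [sum_rootDist] using sum_trans_mul θ lam i 1

theorem sum_sum_trans_mul {X : Type*} [Fintype X] (θ lam : ℝ) (i : Fin 4)
    {g : Fin 4 → X → ℝ} (hg : ∀ k, ∑ x, g k x = 1) :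
    ∑ x, ∑ k, trans θ lam i k * g k x = 1 := by
  rw [sum_comm]
  simp [← mul_sum, hg, sum_trans]

theorem lik_nonneg (hP : ∀ i j, 0 ≤ trans θ lam i j) :
    ∀ (n : ℕ) (i : Fin 4) (A : Config d n), 0 ≤ lik θ lam d n i A
  | 0, i, A => by unfold lik; split <;> norm_num
  | n + 1, i, A => prod_nonneg fun _ _ => sum_nonneg fun k _ =>
      mul_nonneg (hP i k) (lik_nonneg hP n k _)

theorem marg_nonneg (hθ : θ ∈ Set.Icc (0 : ℝ) 1) (hP : ∀ i j, 0 ≤ trans θ lam i j)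
    (A : Config d n) : 0 ≤ marg θ lam d n A :=
  sum_nonneg fun i _ => mul_nonneg (rootDist_nonneg hθ i) (lik_nonneg hP n i A)

def configEquiv (d n : ℕ) : Config d (n + 1) ≃ (Fin d → Config d n) where
  toFun A j := restrict j A
  invFun F p := F (p 0) (Fin.tail p)
  left_inv A := funext fun p => congrArg A (Fin.cons_self_tail p)
  right_inv F := funext fun j => funext fun p => by simp [restrict, Fin.tail_cons]

theorem restrict_configEquiv_symm (F : Fin d → Config d n) (j : Fin d) :
    restrict j ((configEquiv d n).symm F) = F j := rfl

theorem lik_succ_configEquiv_symm (i : Fin 4) (F : Fin d → Config d n) :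
    lik θ lam d (n + 1) i ((configEquiv d n).symm F)
      = ∏ j, ∑ k, trans θ lam i k * lik θ lam d n k (F j) := by
  simp only [lik, restrict_configEquiv_symm]

theorem sum_lik : ∀ (n : ℕ) (i : Fin 4), ∑ A : Config d n, lik θ lam d n i A = 1
  | 0, i => by
    rw [← (Equiv.funUnique (Vtx d 0) (Fin 4)).symm.sum_comp]
    simp [lik]
  | n + 1, i => by
    rw [← (configEquiv d n).symm.sum_comp]
    simp_rw [lik_succ_configEquiv_symm]
    rw [← Fintype.prod_sum fun _ C => ∑ k, trans θ lam i k * lik θ lam d n k C]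
    simp [sum_sum_trans_mul θ lam i (sum_lik n)]

theorem sum_marg : ∑ A : Config d n, marg θ lam d n A = 1 := by
  simp only [marg]
  rw [sum_comm]
  simp [← mul_sum, sum_lik, sum_rootDist]

theorem condE_const (i : Fin 4) (c : ℝ) : condE θ lam d n i (fun _ => c) = c := by
  rw [condE, ← sum_mul, sum_lik, one_mul]

theorem uncondE_eq_sum_condE (g : Config d n → ℝ) :
    uncondE θ lam d n g = ∑ i, rootDist θ i * condE θ lam d n i g := by
  simp only [uncondE, condE, marg, sum_mul, mul_sum, mul_assoc]
  exact sum_comm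

/-- The observations on the subtree of one child of the root are those of a broadcast started
from `P i ·`. -/
theorem condE_succ_comp_restrict (j : Fin d) (i : Fin 4) (w : Config d n → ℝ) :
    condE θ lam d (n + 1) i (w ∘ restrict j)
      = lam * condE θ lam d n i w + (1 - lam) * uncondE θ lam d n w := by
  rw [condE, ← (configEquiv d n).symm.sum_comp]
  simp_rw [Function.comp_apply, lik_succ_configEquiv_symm, restrict_configEquiv_symm]
  rw [Fintype.sum_prod_mul_apply (sum_sum_trans_mul θ lam i (sum_lik n)) w j]
  simp only [sum_trans_mul, add_mul, sum_add_distrib, condE, uncondE, marg, mul_sum, sum_mul,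
    mul_assoc]

theorem uncondE_succ_comp_restrict (j : Fin d) (w : Config d n → ℝ) :
    uncondE θ lam d (n + 1) (w ∘ restrict j) = uncondE θ lam d n w := by
  calc uncondE θ lam d (n + 1) (w ∘ restrict j)
      = ∑ i, rootDist θ i * (lam * condE θ lam d n i w + (1 - lam) * uncondE θ lam d n w) := by
        simp only [uncondE_eq_sum_condE, condE_succ_comp_restrict]
    _ = lam * ∑ i, rootDist θ i * condE θ lam d n i w
          + (1 - lam) * uncondE θ lam d n w * ∑ i, rootDist θ i := by
        simp only [mul_add, sum_add_distrib, mul_sum]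
        congr 1 <;> exact sum_congr rfl fun _ _ => by ring
    _ = uncondE θ lam d n w := by
        rw [← uncondE_eq_sum_condE, sum_rootDist]
        ring

theorem marg_mul_post (hθ : θ ∈ Set.Icc (0 : ℝ) 1) (hP : ∀ i j, 0 ≤ trans θ lam i j)
    (i : Fin 4) (A : Config d n) :
    marg θ lam d n A * post θ lam d n i A = rootDist θ i * lik θ lam d n i A := by
  by_cases h : marg θ lam d n A = 0
  · have hterms := (sum_eq_zero_iff_of_nonneg fun k _ =>
      mul_nonneg (rootDist_nonneg hθ k) (lik_nonneg hP n k A)).mp h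
    simp [h, hterms i (mem_univ i)]
  · rw [post, mul_div_cancel₀ _ h]

theorem sq_uncondE_mul_le (hθ : θ ∈ Set.Icc (0 : ℝ) 1) (hP : ∀ i j, 0 ≤ trans θ lam i j)
    (f g : Config d n → ℝ) :
    uncondE θ lam d n (fun A => f A * g A) ^ 2
      ≤ uncondE θ lam d n (fun A => f A ^ 2) * uncondE θ lam d n (fun A => g A ^ 2) :=
  sum_sq_le_sum_mul_sum_of_sq_le_mul univ
    (fun A _ => mul_nonneg (marg_nonneg hθ hP A) (sq_nonneg _))
    (fun A _ => mul_nonneg (marg_nonneg hθ hP A) (sq_nonneg _)) fun _ _ => le_of_eq (by ring)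

theorem uncondE_post_mul (hθ : θ ∈ Set.Icc (0 : ℝ) 1) (hP : ∀ i j, 0 ≤ trans θ lam i j)
    (i : Fin 4) (g : Config d n → ℝ) :
    uncondE θ lam d n (fun A => post θ lam d n i A * g A) = rootDist θ i * condE θ lam d n i g := by
  simp only [uncondE, condE, ← mul_assoc, marg_mul_post hθ hP, mul_sum]

noncomputable def centeredPost (θ lam : ℝ) (d n : ℕ) (i : Fin 4) (A : Config d n) : ℝ :=
  post θ lam d n i A - rootDist θ i

noncomputable def postVar (θ lam : ℝ) (d n : ℕ) (i : Fin 4) : ℝ :=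
  uncondE θ lam d n (fun A => centeredPost θ lam d n i A ^ 2)

theorem postVar_nonneg (hθ : θ ∈ Set.Icc (0 : ℝ) 1) (hP : ∀ i j, 0 ≤ trans θ lam i j)
    (i : Fin 4) : 0 ≤ postVar θ lam d n i :=
  sum_nonneg fun A _ => mul_nonneg (marg_nonneg hθ hP A) (sq_nonneg _)

theorem uncondE_centeredPost_mul (hθ : θ ∈ Set.Icc (0 : ℝ) 1)
    (hP : ∀ i j, 0 ≤ trans θ lam i j) (i : Fin 4) (g : Config d n → ℝ) :
    uncondE θ lam d n (fun A => centeredPost θ lam d n i A * g A)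
      = rootDist θ i * (condE θ lam d n i g - uncondE θ lam d n g) := by
  rw [mul_sub, ← uncondE_post_mul hθ hP]
  simp only [centeredPost, uncondE, sub_mul, mul_sub, sum_sub_distrib, mul_sum]
  simp only [mul_left_comm]

theorem uncondE_centeredPost (hθ : θ ∈ Set.Icc (0 : ℝ) 1) (hP : ∀ i j, 0 ≤ trans θ lam i j)
    (i : Fin 4) : uncondE θ lam d n (centeredPost θ lam d n i) = 0 := by
  simpa [condE_const, uncondE, sum_marg] using
    uncondE_centeredPost_mul (d := d) (n := n) hθ hP i (fun _ => 1)

theorem postVar_eq (hθ : θ ∈ Set.Icc (0 : ℝ) 1) (hP : ∀ i j, 0 ≤ trans θ lam i j)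
    (i : Fin 4) :
    postVar θ lam d n i = rootDist θ i * condE θ lam d n i (centeredPost θ lam d n i) := by
  rw [postVar]
  simp_rw [sq, uncondE_centeredPost_mul hθ hP, uncondE_centeredPost hθ hP, sub_zero]

theorem uncondE_centeredPost_mul_comp_restrict (hθ : θ ∈ Set.Icc (0 : ℝ) 1)
    (hP : ∀ i j, 0 ≤ trans θ lam i j) (j : Fin d) (i : Fin 4) :
    uncondE θ lam d (n + 1)
        (fun A => centeredPost θ lam d (n + 1) i A * centeredPost θ lam d n i (restrict j A))
      = lam * postVar θ lam d n i := by
  have h := uncondE_centeredPost_mul (n := n + 1) hθ hP i (centeredPost θ lam d n i ∘ restrict j)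
  rw [condE_succ_comp_restrict, uncondE_succ_comp_restrict, uncondE_centeredPost hθ hP] at h
  rw [postVar_eq hθ hP]
  simpa [mul_left_comm] using h

theorem sq_mul_postVar_le_postVar_succ (hθ : θ ∈ Set.Icc (0 : ℝ) 1)
    (hP : ∀ i j, 0 ≤ trans θ lam i j) (hd : 0 < d) (i : Fin 4) :
    lam ^ 2 * postVar θ lam d n i ≤ postVar θ lam d (n + 1) i := by
  let j : Fin d := ⟨0, hd⟩
  have hcs := sq_uncondE_mul_le hθ hP (centeredPost θ lam d (n + 1) i)
    (fun A => centeredPost θ lam d n i (restrict j A))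
  have hrestrict : uncondE θ lam d (n + 1) (fun A => centeredPost θ lam d n i (restrict j A) ^ 2)
      = postVar θ lam d n i :=
    uncondE_succ_comp_restrict j (fun B => centeredPost θ lam d n i B ^ 2)
  rw [uncondE_centeredPost_mul_comp_restrict hθ hP, hrestrict, ← postVar] at hcs
  have hV := postVar_nonneg (n := n) (d := d) hθ hP i
  rcases hV.eq_or_lt with hzero | hpos
  · rw [← hzero, mul_zero]
    exact postVar_nonneg hθ hP i
  · nlinarith

theorem postVar_zero_eq (hθ : θ ∈ Set.Icc (0 : ℝ) 1) (hP : ∀ i j, 0 ≤ trans θ lam i j) :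
    postVar θ lam d n 0 = θ / 2 * xT θ lam d n := by
  rw [postVar_eq hθ hP, xT, rootDist_zero]
  simp only [centeredPost, condE, mul_sub, sum_sub_distrib, ← sum_mul, sum_lik, one_mul,
    rootDist_zero]

end

/-- For any `ϱ > 0` there is `γ = γ(θ, ϱ) > 0` with
`x_{n+1;θ} ≥ γ·x_{n;θ}` whenever `|λ| > ϱ` and `dλ² ≤ 1`. -/
theorem x_does_not_drop_fast (θ : ℝ) (hθ : θ ∈ Set.Ioo (0 : ℝ) 1)
    (ϱ : ℝ) (hϱ : 0 < ϱ) :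
    ∃ γ : ℝ, 0 < γ ∧ ∀ d : ℕ, 2 ≤ d → ∀ lam : ℝ,
      (∀ i j : Fin 4, 0 ≤ trans θ lam i j) → ϱ < |lam| → (d : ℝ) * lam ^ 2 ≤ 1 →
      ∀ n : ℕ, γ * xT θ lam d n ≤ xT θ lam d (n + 1) := by
  refine ⟨ϱ ^ 2, by positivity, fun d hd lam hP hϱlam _ n => ?_⟩
  have hθ' : θ ∈ Set.Icc (0 : ℝ) 1 := Set.Ioo_subset_Icc_self hθ
  have hstep := sq_mul_postVar_le_postVar_succ (d := d) (n := n) hθ' hP (by omega) 0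
  rw [postVar_zero_eq hθ' hP, postVar_zero_eq hθ' hP] at hstep
  have hϱsq : ϱ ^ 2 ≤ lam ^ 2 := by
    rw [← sq_abs lam]
    exact pow_le_pow_left₀ hϱ.le hϱlam.le 2
  have hx : 0 ≤ θ / 2 * xT θ lam d n := by
    rw [← postVar_zero_eq hθ' hP]
    exact postVar_nonneg hθ' hP 0
  have hθpos : 0 < θ / 2 := by linarith [hθ.1]
  refine le_of_mul_le_mul_left ?_ hθpos
  calc θ / 2 * (ϱ ^ 2 * xT θ lam d n) = ϱ ^ 2 * (θ / 2 * xT θ lam d n) := by ring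
    _ ≤ lam ^ 2 * (θ / 2 * xT θ lam d n) := mul_le_mul_of_nonneg_right hϱsq hx
    _ ≤ θ / 2 * xT θ lam d (n + 1) := hstep

end Broadcast
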